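/- Let p and q be coprime odd positive integers. Then there exist n ≥ 1 and integers δ_1, …, δ_n such that every δ_i is even, |δ_i| ≥ 2 for all i, the denominator q_n of the negative continued fraction [δ_1, …, δ_n] is nonzero, and (p+q)/p = p_n/q_n (i.e. (p+q)/p = [δ_1, …, δ_n]). -/

import Mathlib

/-- Convergent numerators of the negative continued fraction `[δ 1, …, δ n]`. -/
def ncfP (δ : ℕ → ℤ) : ℕ → ℤ
  | 0 => 1
  | 1 => δ 1
  | (i+2) => δ (i+2) * ncfP δ (i+1) - ncfP δ i

/-- Convergent denominators of the negative continued fraction `[δ 1, …, δ n]`. -/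
def ncfQ (δ : ℕ → ℤ) : ℕ → ℤ
  | 0 => 0
  | 1 => 1
  | (i+2) => δ (i+2) * ncfQ δ (i+1) - ncfQ δ i

/-!
Division by `2y` with balanced remainder writes `x = 2ky - r` with `|r| ≤ |y|`, so that
`x / y = 2k - 1 / (y / r)`. When `x + y` is odd so is `y + r`, which rules out `|r| = |y|`;
and `|y| < |x|` forces `k ≠ 0`. Iterating on `(y, r)` is a Euclidean algorithm with even
quotients `2k`, `|2k| ≥ 2`, that stops when `r = 0`. For `x = p + q`, `y = p` the sum
`x + y = 2p + q` is odd.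
-/

-- `[d, δ 1, δ 2, …]`; the value at index `0` plays no role.
def ncfCons (d : ℤ) (δ : ℕ → ℤ) : ℕ → ℤ
  | i + 2 => δ (i + 1)
  | _ => d

theorem ncfP_ncfCons (d : ℤ) (δ : ℕ → ℤ) (n : ℕ) :
    ncfP (ncfCons d δ) (n + 1) = d * ncfP δ n - ncfQ δ n := by
  induction n using Nat.twoStepInduction with
  | zero => simp [ncfP, ncfQ, ncfCons]
  | one => simp [ncfP, ncfQ, ncfCons, mul_comm]
  | more n ih₀ ih₁ =>
    show δ (n + 2) * ncfP (ncfCons d δ) (n + 2) - ncfP (ncfCons d δ) (n + 1) =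
      d * (δ (n + 2) * ncfP δ (n + 1) - ncfP δ n) - (δ (n + 2) * ncfQ δ (n + 1) - ncfQ δ n)
    rw [ih₁, ih₀]
    ring

theorem ncfQ_ncfCons (d : ℤ) (δ : ℕ → ℤ) (n : ℕ) :
    ncfQ (ncfCons d δ) (n + 1) = ncfP δ n := by
  induction n using Nat.twoStepInduction with
  | zero => rfl
  | one => simp [ncfP, ncfQ, ncfCons]
  | more n ih₀ ih₁ =>
    rw [ncfQ, ncfP, ih₀, ih₁]
    rfl

def HasEvenNCF (x : ℚ) : Prop :=
  ∃ (n : ℕ) (δ : ℕ → ℤ), 1 ≤ n ∧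
    (∀ i, 1 ≤ i → i ≤ n → Even (δ i) ∧ 2 ≤ |δ i|) ∧
    ncfQ δ n ≠ 0 ∧ x = (ncfP δ n : ℚ) / (ncfQ δ n : ℚ)

theorem hasEvenNCF_intCast {d : ℤ} (hd : Even d) (hd2 : 2 ≤ |d|) : HasEvenNCF d :=
  ⟨1, fun _ => d, le_rfl, fun _ _ _ => ⟨hd, hd2⟩, one_ne_zero, by simp [ncfP, ncfQ]⟩

theorem HasEvenNCF.intCast_sub_inv {x : ℚ} (hx : HasEvenNCF x) (hx0 : x ≠ 0) {d : ℤ}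
    (hd : Even d) (hd2 : 2 ≤ |d|) : HasEvenNCF (d - x⁻¹) := by
  obtain ⟨n, δ, hn, hδ, hQ, rfl⟩ := hx
  have hP : ncfP δ n ≠ 0 := by rintro h; simp [h] at hx0
  refine ⟨n + 1, ncfCons d δ, by omega, ?_, ?_, ?_⟩
  · intro i hi hin
    match i, hi with
    | 1, _ => exact ⟨hd, hd2⟩
    | i + 2, _ => exact hδ (i + 1) (by omega) (by omega)
  · rwa [ncfQ_ncfCons]
  · rw [ncfP_ncfCons, ncfQ_ncfCons, inv_div]
    push_cast
    field_simp

theorem exists_eq_two_mul_mul_sub (x : ℤ) {y : ℤ} (hy : y ≠ 0) :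
    ∃ k r : ℤ, x = 2 * k * y - r ∧ |r| ≤ |y| := by
  set m := 2 * y.natAbs
  have hm : 0 < m := by omega
  have hm' : (m : ℤ) = 2 * |y| := by simp [m]
  obtain ⟨k, hk⟩ : 2 * y ∣ x - x.bmod m :=
    (mul_dvd_mul_left 2 (self_dvd_abs y)).trans (hm' ▸ Int.dvd_self_sub_bmod)
  refine ⟨k, -x.bmod m, by linarith, abs_le.mpr ⟨?_, ?_⟩⟩
  · have := Int.bmod_lt (x := x) hm
    omega
  · have := Int.le_bmod (x := x) hm
    omega

theorem hasEvenNCF_div (x y : ℤ) (hy : y ≠ 0) (hyx : |y| < |x|) (hodd : Odd (x + y)) :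
    HasEvenNCF (x / y) := by
  induction hyN : y.natAbs using Nat.strong_induction_on generalizing x y with
  | _ N ih =>
    obtain ⟨k, r, rfl, hry⟩ := exists_eq_two_mul_mul_sub x hy
    have hk0 : k ≠ 0 := by
      rintro rfl
      rw [mul_zero, zero_mul, zero_sub, abs_neg] at hyx
      linarith
    have hk : 2 ≤ |2 * k| := by
      rw [abs_mul, abs_two]
      linarith [Int.one_le_abs hk0]
    have hxy : ((2 * k * y - r : ℤ) : ℚ) / y = (2 * k : ℤ) - ((y : ℚ) / r)⁻¹ := by
      rw [inv_div]; push_cast; field_simp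
    by_cases hr : r = 0
    · subst hr
      simpa [hy] using hasEvenNCF_intCast (even_two_mul k) hk
    have hodd' : Odd (y + r) := by
      have h := hodd.sub_even (even_two_mul (k * y - r))
      rwa [show 2 * k * y - r + y - 2 * (k * y - r) = y + r by ring] at h
    -- `y + r` is odd, so `r ≠ ±y`
    have hry' : |r| < |y| := by
      refine lt_of_le_of_ne hry fun habs => ?_
      rcases abs_eq_abs.mp habs with rfl | rfl
      · exact Int.not_even_iff_odd.mpr hodd' ⟨r, rfl⟩
      · simp at hodd'
    have hN : r.natAbs < N := by
      rwa [← hyN, ← Nat.cast_lt (α := ℤ), Int.natCast_natAbs, Int.natCast_natAbs]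
    rw [hxy]
    refine (ih _ hN y r hr hry' hodd' rfl).intCast_sub_inv ?_ (even_two_mul k) hk
    exact div_ne_zero (by exact_mod_cast hy) (by exact_mod_cast hr)

theorem stmt13_general (p q : ℤ) (hq : Odd q)
    (hppos : 0 < p) (hqpos : 0 < q) :
    ∃ (n : ℕ) (δ : ℕ → ℤ), 1 ≤ n ∧
      (∀ i, 1 ≤ i → i ≤ n → Even (δ i) ∧ 2 ≤ |δ i|) ∧
      ncfQ δ n ≠ 0 ∧
      ((p : ℚ) + (q : ℚ)) / (p : ℚ) = (ncfP δ n : ℚ) / (ncfQ δ n : ℚ) := by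
  have hlt : |p| < |p + q| := by
    rw [abs_of_pos hppos, abs_of_pos (by omega)]
    omega
  have hodd : Odd (p + q + p) := by
    rw [show p + q + p = 2 * p + q by ring]
    exact (even_two_mul p).add_odd hq
  have h := hasEvenNCF_div (p + q) p hppos.ne' hlt hodd
  push_cast at h
  exact h

/-- for coprime odd positive integers `p`, `q` there is a
negative continued fraction expansion `(p+q)/p = [δ 1, …, δ n]` with all
`δ i` even and `|δ i| ≥ 2`. -/
theorem stmt13 (p q : ℤ) (hcop : IsCoprime p q) (hp : Odd p) (hq : Odd q)
    (hppos : 0 < p) (hqpos : 0 < q) :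
    ∃ (n : ℕ) (δ : ℕ → ℤ), 1 ≤ n ∧
      (∀ i, 1 ≤ i → i ≤ n → Even (δ i) ∧ 2 ≤ |δ i|) ∧
      ncfQ δ n ≠ 0 ∧
      ((p : ℚ) + (q : ℚ)) / (p : ℚ) = (ncfP δ n : ℚ) / (ncfQ δ n : ℚ) :=
  stmt13_general p q hq hppos hqpos
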